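/- Let G be an additive subgroup of ℝ containing 1. Then the closure of G in ℝ with respect to the Euclidean topology equals the set {r ∈ ℝ : den(r) divides lcm{den(g) : g ∈ G}}, where the lcm is computed in ℕ ordered by divisibility with 0 as top element. -/

import Mathlib

open Classical in
/-- The denominator of a real number: the reduced denominator if rational, `0` if irrational. -/
noncomputable def den (r : ℝ) : ℕ :=
  if h : ∃ q : ℚ, (q : ℝ) = r then h.choose.den else 0

/-- The least common multiple of a set of naturals, computed in `ℕ` ordered by
divisibility with `0` as top element. -/
noncomputable def setLcm (S : Set ℕ) : ℕ :=
  sInf {n | (∀ s ∈ S, s ∣ n) ∧ ∀ m : ℕ, (∀ s ∈ S, s ∣ m) → n ∣ m}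

/-! A subgroup of `ℝ` is either dense or cyclic. If `G` is dense, its denominators have no
common multiple `L ≠ 0`, for otherwise `G` would lie in the discrete group `L⁻¹ℤ`; so the lcm
is `0` and both sides are `ℝ`. If `G = aℤ` contains `1`, then `G = n⁻¹ℤ` for some `n ≠ 0`; this
group is closed, its lcm of denominators is `den n⁻¹ = n`, and it consists exactly of the reals
whose denominator divides `n`. -/

section

open AddSubgroup

theorem Rat.den_dvd_iff_mem_zmultiples {q : ℚ} {n : ℕ} (hn : n ≠ 0) :
    q.den ∣ n ↔ q ∈ zmultiples (n⁻¹ : ℚ) := by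
  rw [mem_zmultiples_iff]
  constructor
  · rintro ⟨c, rfl⟩
    have hc : (c : ℚ) ≠ 0 := by rintro h; simp_all
    refine ⟨q.num * c, ?_⟩
    rw [zsmul_eq_mul, ← div_eq_mul_inv]
    push_cast
    rw [mul_div_mul_right _ _ hc, Rat.num_div_den]
  · rintro ⟨k, rfl⟩
    rw [zsmul_eq_mul, ← div_eq_mul_inv, ← Int.cast_natCast, ← Rat.divInt_eq_div]
    exact_mod_cast Rat.den_dvd k n

theorem den_ratCast (q : ℚ) : den q = q.den := by
  have h : ∃ p : ℚ, (p : ℝ) = q := ⟨q, rfl⟩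
  rw [den, dif_pos h, Rat.cast_injective h.choose_spec]

theorem den_inv_natCast {n : ℕ} (hn : n ≠ 0) : den (n⁻¹ : ℝ) = n := by
  rw [← Rat.cast_natCast, ← Rat.cast_inv, den_ratCast, Rat.inv_natCast_den_of_pos (by omega)]

theorem den_dvd_iff_mem_zmultiples {r : ℝ} {n : ℕ} (hn : n ≠ 0) :
    den r ∣ n ↔ r ∈ zmultiples (n⁻¹ : ℝ) := by
  by_cases hr : ∃ q : ℚ, (q : ℝ) = r
  · obtain ⟨q, rfl⟩ := hr
    rw [den_ratCast, Rat.den_dvd_iff_mem_zmultiples hn, mem_zmultiples_iff, mem_zmultiples_iff]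
    refine exists_congr fun k => ?_
    rw [← (Rat.cast_injective (α := ℝ)).eq_iff]
    simp [zsmul_eq_mul]
  · rw [den, dif_neg hr, zero_dvd_iff, mem_zmultiples_iff]
    simp only [hn, false_iff, not_exists]
    rintro k rfl
    exact hr ⟨k • (n⁻¹ : ℚ), by simp [zsmul_eq_mul]⟩

theorem dvd_setLcm {S : Set ℕ} {s : ℕ} (hs : s ∈ S) : s ∣ setLcm S := by
  rcases Set.eq_empty_or_nonempty {n | (∀ s ∈ S, s ∣ n) ∧ ∀ m : ℕ, (∀ s ∈ S, s ∣ m) → n ∣ m}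
    with h | h
  · rw [setLcm, h, Nat.sInf_empty]
    exact dvd_zero s
  · exact (Nat.sInf_mem h).1 s hs

theorem setLcm_eq_of_mem {S : Set ℕ} {n : ℕ} (hn : n ∈ S) (h : ∀ s ∈ S, s ∣ n) :
    setLcm S = n := by
  have : {k | (∀ s ∈ S, s ∣ k) ∧ ∀ m : ℕ, (∀ s ∈ S, s ∣ m) → k ∣ m} = {n} := by
    ext k
    refine ⟨fun hk => Nat.dvd_antisymm (hk.2 n h) (hk.1 n hn), ?_⟩
    rintro rfl
    exact ⟨h, fun m hm => hm k hn⟩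
  rw [setLcm, this, csInf_singleton]

theorem setLcm_den_eq_zero_of_dense {G : AddSubgroup ℝ} (hG : Dense (G : Set ℝ)) :
    setLcm (den '' G) = 0 := by
  by_contra hL
  have hle : G ≤ zmultiples ((setLcm (den '' G) : ℕ)⁻¹ : ℝ) := fun g hg =>
    (den_dvd_iff_mem_zmultiples hL).mp (dvd_setLcm ⟨g, hg, rfl⟩)
  exact dense_iff_ne_zmultiples.mp (hG.mono hle) _ rfl

theorem setLcm_den_zmultiples_inv_natCast {n : ℕ} (hn : n ≠ 0) :
    setLcm (den '' zmultiples (n⁻¹ : ℝ)) = n := by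
  refine setLcm_eq_of_mem ⟨_, mem_zmultiples _, den_inv_natCast hn⟩ ?_
  rintro _ ⟨r, hr, rfl⟩
  exact (den_dvd_iff_mem_zmultiples hn).mpr hr

theorem exists_zmultiples_eq_zmultiples_inv_natCast {a : ℝ} (h : 1 ∈ zmultiples a) :
    ∃ n : ℕ, n ≠ 0 ∧ zmultiples a = zmultiples (n⁻¹ : ℝ) := by
  obtain ⟨k, hk⟩ := mem_zmultiples_iff.mp h
  have hk0 : k ≠ 0 := by rintro rfl; simp at hk
  have ha : a = (k : ℝ)⁻¹ := by rw [zsmul_eq_mul] at hk; exact eq_inv_of_mul_eq_one_right hk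
  refine ⟨k.natAbs, by omega, ?_⟩
  rw [ha, Nat.cast_natAbs, Int.cast_abs]
  rcases abs_choice (k : ℝ) with h | h <;> rw [h]
  rw [inv_neg, zmultiples_neg]

end

/-- For an additive subgroup `G` of `ℝ` containing `1`, the closure of
`G` in the Euclidean topology is `{r ∈ ℝ : den r ∣ lcm {den g : g ∈ G}}`. -/
theorem closure_subgroup_eq_den_divides
    (G : AddSubgroup ℝ) (h1 : (1 : ℝ) ∈ G) :
    closure (G : Set ℝ) = {r : ℝ | den r ∣ setLcm (den '' (G : Set ℝ))} := by
  rcases AddSubgroup.dense_or_cyclic G with hG | ⟨a, rfl⟩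
  · rw [hG.closure_eq, setLcm_den_eq_zero_of_dense hG]
    simp
  · rw [← AddSubgroup.zmultiples_eq_closure] at h1 ⊢
    obtain ⟨n, hn, hG⟩ := exists_zmultiples_eq_zmultiples_inv_natCast h1
    rw [hG, AddSubgroup.isClosed_of_discrete.closure_eq, setLcm_den_zmultiples_inv_natCast hn]
    ext r
    exact (den_dvd_iff_mem_zmultiples hn).symm
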